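/- arXiv:0907.1110 — 5 statements merged into one kernel-verified Lean document; each statement's English description precedes it below -/
import Mathlib

section
/- For the shifted Legendre polynomial P_n and any nonnegative integer k, ∫_0^1 x^k P_n(x) dx = (-1)^n (k!)^2 / ((k-n)! (k+n+1)!) when k ≥ n, and equals 0 when 0 ≤ k < n. -/
/-! Integrating by parts `n` times moves the derivatives in Rodrigues' formula from
`xⁿ(1 - x)ⁿ` onto `xᵏ`; no boundary terms appear because `xⁿ(1 - x)ⁿ` vanishes to order `n`
at `0` and at `1`. What is left is `k(k-1)⋯(k-n+1) / n!` times the beta integral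
`∫₀¹ xᵏ(1 - x)ⁿ dx = k! n! / (k + n + 1)!`, and the falling factorial vanishes when `k < n`. -/

open MeasureTheory intervalIntegral

noncomputable def shiftedLegendre (n : ℕ) : ℝ → ℝ :=
  fun x => (1 / (n.factorial : ℝ)) * iteratedDeriv n (fun y : ℝ => y ^ n * (1 - y) ^ n) x

open Polynomial hiding shiftedLegendre
open scoped Nat

namespace Polynomial

theorem iteratedDeriv_eval (p : ℝ[X]) (n : ℕ) :
    iteratedDeriv n (fun x => p.eval x) = fun x => (derivative^[n] p).eval x := by
  induction n generalizing p with
  | zero => rfl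
  | succ n ih =>
    have hderiv : deriv (fun x => p.eval x) = fun x => (derivative p).eval x := by
      ext; exact p.deriv
    rw [iteratedDeriv_succ', hderiv, ih, Function.iterate_succ_apply]

theorem integral_eval_mul_derivative (p q : ℝ[X]) (a b : ℝ) :
    ∫ x in a..b, p.eval x * (derivative q).eval x =
      p.eval b * q.eval b - p.eval a * q.eval a -
        ∫ x in a..b, (derivative p).eval x * q.eval x :=
  intervalIntegral.integral_mul_deriv_eq_deriv_mul (fun x _ => p.hasDerivAt x)
    (fun x _ => q.hasDerivAt x) ((derivative p).continuous.intervalIntegrable a b)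
    ((derivative q).continuous.intervalIntegrable a b)

theorem eval_iterate_derivative_eq_zero_of_pow_dvd {q : ℝ[X]} {a : ℝ} {n : ℕ}
    (h : (X - C a) ^ (n + 1) ∣ q) : (derivative^[n] q).eval a = 0 := by
  have hdvd := pow_sub_dvd_iterate_derivative_of_pow_dvd n h
  rw [Nat.add_sub_cancel_left, pow_one] at hdvd
  exact dvd_iff_isRoot.mp hdvd

theorem integral_eval_mul_iterate_derivative (p q : ℝ[X]) {a b : ℝ} {n : ℕ}
    (ha : (X - C a) ^ n ∣ q) (hb : (X - C b) ^ n ∣ q) :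
    ∫ x in a..b, p.eval x * (derivative^[n] q).eval x =
      (-1) ^ n * ∫ x in a..b, (derivative^[n] p).eval x * q.eval x := by
  induction n generalizing p with
  | zero => simp
  | succ n ih =>
    rw [Function.iterate_succ_apply', integral_eval_mul_derivative,
      eval_iterate_derivative_eq_zero_of_pow_dvd ha, eval_iterate_derivative_eq_zero_of_pow_dvd hb,
      ih _ ((pow_dvd_pow _ n.le_succ).trans ha) ((pow_dvd_pow _ n.le_succ).trans hb),
      Function.iterate_succ_apply]
    ring

end Polynomial

theorem integral_pow_mul_one_sub_pow (a b : ℕ) :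
    ∫ x in (0:ℝ)..1, x ^ a * (1 - x) ^ b = (a ! * b ! : ℝ) / (a + b + 1)! := by
  have hbeta := Complex.betaIntegral_eq_Gamma_mul_div (a + 1) (b + 1)
    (by simp; positivity) (by simp; positivity)
  rw [show (a + 1 : ℂ) + (b + 1) = ((a + b + 1 : ℕ) : ℂ) + 1 by push_cast; ring] at hbeta
  simp only [Complex.Gamma_nat_eq_factorial, Complex.betaIntegral, add_sub_cancel_right] at hbeta
  apply Complex.ofReal_injective
  push_cast
  rw [← hbeta, ← intervalIntegral.integral_ofReal]
  refine integral_congr fun x _ => ?_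
  norm_cast

theorem shiftedLegendre_eq_eval (n : ℕ) :
    shiftedLegendre n =
      fun x => (n ! : ℝ)⁻¹ * (derivative^[n] (X ^ n * (1 - X) ^ n : ℝ[X])).eval x := by
  have hpoly : (fun y : ℝ => y ^ n * (1 - y) ^ n) =
      fun y => (X ^ n * (1 - X) ^ n : ℝ[X]).eval y := by
    simp
  ext x
  rw [shiftedLegendre, hpoly, iteratedDeriv_eval, one_div]

theorem integral_pow_mul_shiftedLegendre (n k : ℕ) :
    ∫ x in (0:ℝ)..1, x ^ k * shiftedLegendre n x =
      (-1) ^ n * k.descFactorial n * k ! / (k + n + 1)! := by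
  have h0 : (X - C 0) ^ n ∣ (X ^ n * (1 - X) ^ n : ℝ[X]) := by simp
  have h1 : (X - C 1) ^ n ∣ (X ^ n * (1 - X) ^ n : ℝ[X]) :=
    dvd_mul_of_dvd_right (Dvd.intro_left ((-1) ^ n) (by rw [← mul_pow, C_1]; ring)) _
  have hmoment :
      ∫ x in (0:ℝ)..1, (derivative^[n] (X ^ k : ℝ[X])).eval x * (x ^ n * (1 - x) ^ n) =
        k.descFactorial n * ∫ x in (0:ℝ)..1, x ^ k * (1 - x) ^ n := by
    rw [← intervalIntegral.integral_const_mul]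
    rcases le_or_gt n k with hnk | hkn
    · refine integral_congr fun x _ => ?_
      simp only [iterate_derivative_X_pow_eq_C_mul, eval_mul, eval_C, eval_pow, eval_X]
      rw [← pow_sub_mul_pow x hnk]
      ring
    · simp [iterate_derivative_eq_zero ((natDegree_X_pow_le k).trans_lt (by exact_mod_cast hkn)),
        Nat.descFactorial_eq_zero_iff_lt.mpr hkn]
  calc ∫ x in (0:ℝ)..1, x ^ k * shiftedLegendre n x
      = (n ! : ℝ)⁻¹ * ∫ x in (0:ℝ)..1,
          (X ^ k : ℝ[X]).eval x * (derivative^[n] (X ^ n * (1 - X) ^ n : ℝ[X])).eval x := by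
        rw [shiftedLegendre_eq_eval, ← intervalIntegral.integral_const_mul]
        refine integral_congr fun x _ => ?_
        simp only [eval_pow, eval_X]
        ring
    _ = (n ! : ℝ)⁻¹ * ((-1) ^ n * (k.descFactorial n * (k ! * n ! / (k + n + 1)!))) := by
        rw [integral_eval_mul_iterate_derivative _ _ h0 h1, ← integral_pow_mul_one_sub_pow,
          ← hmoment]
        simp
    _ = (-1) ^ n * k.descFactorial n * k ! / (k + n + 1)! := by
        field_simp

theorem stmt_1 (n k : ℕ) :
    (n ≤ k →
      ∫ x in (0:ℝ)..1, x ^ k * shiftedLegendre n x =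
        (-1) ^ n * ((k.factorial : ℝ)) ^ 2 /
          (((k - n).factorial : ℝ) * ((k + n + 1).factorial : ℝ))) ∧
    (k < n → ∫ x in (0:ℝ)..1, x ^ k * shiftedLegendre n x = 0) := by
  refine ⟨fun hnk => ?_, fun hkn => ?_⟩
  · have hdesc : ((k - n)! : ℝ) * k.descFactorial n = k ! := by
      exact_mod_cast Nat.factorial_mul_descFactorial hnk
    rw [integral_pow_mul_shiftedLegendre, ← hdesc]
    field_simp
  · simp [integral_pow_mul_shiftedLegendre, Nat.descFactorial_eq_zero_iff_lt.mpr hkn]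
end

section
/- For r ≥ 2 and any polynomial R with real coefficients a_0,...,a_n satisfying R(x) = ∑_{l=0}^n a_l x^l, the r-fold integral ∫_{[0,1]^r} (x_1⋯x_r)^z / (1 - x_1⋯x_r) · ∏_{i=1}^r R(x_i) dx equals ∑_{k=0}^∞ (∑_{l=0}^n a_l/(l+k+z+1))^r, for every real z ≥ 0. -/
/-!
On the cube the integrand expands as the geometric series
`∑ₖ ∏ᵢ xᵢ ^ (z + k) R(xᵢ)`, whose `k`-th term is a product of one-variable functions and so
integrates to `(∫₀¹ x ^ (z + k) R(x) dx) ^ r = (∑ₗ aₗ / (l + k + z + 1)) ^ r`. Since `R` is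
bounded by `C = ∑ₗ |aₗ|` on `[0, 1]`, the `k`-th term has `L¹` norm at most `(C / (k + 1)) ^ r`,
which is summable for `r ≥ 2`; this justifies integrating term by term.
-/

open MeasureTheory Set

section GeometricSeries

variable {ι α : Type*} [Fintype ι] [Nonempty ι] {u w : α → ℝ}

lemma hasSum_prod_pow_mul_prod {x : ι → α} (hx : ∀ i, u (x i) ∈ Ico 0 1) :
    HasSum (fun k : ℕ => ∏ i, u (x i) ^ k * w (x i))
      ((∏ i, w (x i)) / (1 - ∏ i, u (x i))) := by
  classical
  have h0 : 0 ≤ ∏ i, u (x i) := Finset.prod_nonneg fun i _ => (hx i).1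
  have h1 : ∏ i, u (x i) < 1 := by
    obtain ⟨i₀⟩ := ‹Nonempty ι›
    rw [← Finset.mul_prod_erase _ _ (Finset.mem_univ i₀)]
    refine (mul_le_of_le_one_right (hx i₀).1 ?_).trans_lt (hx i₀).2
    exact Finset.prod_le_one (fun i _ => (hx i).1) fun i _ => (hx i).2.le
  have h := (hasSum_geometric_of_lt_one h0 h1).mul_right (∏ i, w (x i))
  rw [inv_mul_eq_div] at h
  simpa only [Finset.prod_mul_distrib, Finset.prod_pow] using h

theorem integral_pi_div_one_sub_prod [MeasurableSpace α] {μ : Measure α} [SigmaFinite μ]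
    (hu : AEStronglyMeasurable u μ) (hu01 : ∀ᵐ a ∂μ, u a ∈ Ico 0 1) (hw : Integrable w μ)
    (hsum : Summable fun k : ℕ => (∫ a, ‖u a ^ k * w a‖ ∂μ) ^ Fintype.card ι) :
    ∫ x, (∏ i, w (x i)) / (1 - ∏ i, u (x i)) ∂Measure.pi (fun _ : ι => μ) =
      ∑' k : ℕ, (∫ a, u a ^ k * w a ∂μ) ^ Fintype.card ι := by
  have hint (k : ℕ) : Integrable (fun a => u a ^ k * w a) μ := by
    refine hw.bdd_mul (c := 1) (hu.pow k) (hu01.mono fun a ha => ?_)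
    rw [norm_pow, Real.norm_of_nonneg ha.1]
    exact pow_le_one₀ ha.1 ha.2.le
  have hae : ∀ᵐ x ∂Measure.pi (fun _ : ι => μ), ∀ i, u (x i) ∈ Ico 0 1 :=
    ae_all_iff.2 fun _ => Measure.tendsto_eval_ae_ae (μ := fun _ => μ) hu01
  calc ∫ x, (∏ i, w (x i)) / (1 - ∏ i, u (x i)) ∂Measure.pi (fun _ : ι => μ)
      = ∫ x, ∑' k : ℕ, ∏ i, u (x i) ^ k * w (x i) ∂Measure.pi (fun _ : ι => μ) :=
        integral_congr_ae (hae.mono fun x hx => (hasSum_prod_pow_mul_prod hx).tsum_eq.symm)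
    _ = ∑' k : ℕ, ∫ x, ∏ i, u (x i) ^ k * w (x i) ∂Measure.pi (fun _ : ι => μ) := by
        refine (integral_tsum_of_summable_integral_norm
          (fun k => Integrable.fintype_prod fun _ => hint k) ?_).symm
        refine hsum.congr fun k => ?_
        simp only [norm_prod]
        exact (integral_fintype_prod_eq_pow _).symm
    _ = ∑' k : ℕ, (∫ a, u a ^ k * w a ∂μ) ^ Fintype.card ι :=
        tsum_congr fun k => integral_fintype_prod_eq_pow (fun a => u a ^ k * w a)

end GeometricSeries

section UnitInterval

lemma integrableOn_Ioo_zero_one_rpow {c : ℝ} (hc : -1 < c) :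
    IntegrableOn (fun x : ℝ => x ^ c) (Ioo 0 1) :=
  (intervalIntegrable_iff_integrableOn_Ioo_of_le zero_le_one).1
    (intervalIntegral.intervalIntegrable_rpow' hc)

lemma setIntegral_Ioo_zero_one_rpow {c : ℝ} (hc : -1 < c) :
    ∫ x in Ioo (0 : ℝ) 1, x ^ c = 1 / (c + 1) := by
  rw [← integral_Ioc_eq_integral_Ioo, ← intervalIntegral.integral_of_le zero_le_one,
    integral_rpow (Or.inl hc), Real.one_rpow, Real.zero_rpow (by linarith), sub_zero]

lemma setIntegral_Ioo_zero_one_rpow_mul_sum {s : ℝ} (hs : -1 < s) (t : Finset ℕ) (a : ℕ → ℝ) :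
    ∫ x in Ioo (0 : ℝ) 1, x ^ s * ∑ l ∈ t, a l * x ^ l = ∑ l ∈ t, a l / (l + s + 1) := by
  have hs' (l : ℕ) : -1 < s + l := by linarith [(Nat.cast_nonneg l : (0 : ℝ) ≤ l)]
  calc ∫ x in Ioo (0 : ℝ) 1, x ^ s * ∑ l ∈ t, a l * x ^ l
      = ∫ x in Ioo (0 : ℝ) 1, ∑ l ∈ t, a l * x ^ (s + l) := by
        refine setIntegral_congr_fun measurableSet_Ioo fun x hx => ?_
        simp only [Finset.mul_sum, Real.rpow_add hx.1, Real.rpow_natCast]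
        exact Finset.sum_congr rfl fun l _ => by ring
    _ = ∑ l ∈ t, a l / (l + s + 1) := by
        rw [integral_finsetSum _ fun l _ => (integrableOn_Ioo_zero_one_rpow (hs' l)).const_mul _]
        refine Finset.sum_congr rfl fun l _ => ?_
        rw [integral_const_mul, setIntegral_Ioo_zero_one_rpow (hs' l), add_comm s]
        ring

lemma setIntegral_Ioo_zero_one_pow_mul_rpow_mul_sum {z : ℝ} (hz : -1 < z) (k : ℕ)
    (t : Finset ℕ) (a : ℕ → ℝ) :
    ∫ x in Ioo (0 : ℝ) 1, x ^ k * (x ^ z * ∑ l ∈ t, a l * x ^ l) =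
      ∑ l ∈ t, a l / (l + k + z + 1) := by
  have hzk : -1 < z + k := by linarith [(Nat.cast_nonneg k : (0 : ℝ) ≤ k)]
  calc ∫ x in Ioo (0 : ℝ) 1, x ^ k * (x ^ z * ∑ l ∈ t, a l * x ^ l)
      = ∫ x in Ioo (0 : ℝ) 1, x ^ (z + k) * ∑ l ∈ t, a l * x ^ l :=
        setIntegral_congr_fun measurableSet_Ioo fun x hx => by
          rw [Real.rpow_add hx.1, Real.rpow_natCast]
          ring
    _ = ∑ l ∈ t, a l / (l + k + z + 1) := by
        rw [setIntegral_Ioo_zero_one_rpow_mul_sum hzk]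
        exact Finset.sum_congr rfl fun l _ => by ring

lemma integrableOn_Ioo_zero_one_rpow_mul_sum {z : ℝ} (hz : 0 ≤ z) (t : Finset ℕ) (a : ℕ → ℝ) :
    IntegrableOn (fun x : ℝ => x ^ z * ∑ l ∈ t, a l * x ^ l) (Ioo 0 1) :=
  ((Real.continuous_rpow_const hz).mul (by fun_prop)).integrableOn_Icc.mono_set
    Ioo_subset_Icc_self

lemma abs_rpow_mul_sum_le {z x : ℝ} (hz : 0 ≤ z) (hx : x ∈ Icc (0 : ℝ) 1) (t : Finset ℕ)
    (a : ℕ → ℝ) : |x ^ z * ∑ l ∈ t, a l * x ^ l| ≤ ∑ l ∈ t, |a l| := by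
  have hxz : |x ^ z| ≤ 1 := by
    rw [abs_of_nonneg (Real.rpow_nonneg hx.1 z)]
    exact Real.rpow_le_one hx.1 hx.2 hz
  have hsum : |∑ l ∈ t, a l * x ^ l| ≤ ∑ l ∈ t, |a l| := by
    refine (Finset.abs_sum_le_sum_abs _ _).trans (Finset.sum_le_sum fun l _ => ?_)
    rw [abs_mul, abs_pow, abs_of_nonneg hx.1]
    exact mul_le_of_le_one_right (abs_nonneg _) (pow_le_one₀ hx.1 hx.2)
  rw [abs_mul]
  exact (mul_le_of_le_one_left (abs_nonneg _) hxz).trans hsum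

lemma setIntegral_Ioo_zero_one_norm_pow_mul_le {w : ℝ → ℝ} {C : ℝ}
    (hC : ∀ x ∈ Ioo (0 : ℝ) 1, |w x| ≤ C) (k : ℕ) :
    ∫ x in Ioo (0 : ℝ) 1, ‖x ^ k * w x‖ ≤ C / (k + 1) := by
  have hpow : ∫ x in Ioo (0 : ℝ) 1, x ^ k = 1 / (k + 1) := by
    rw [← integral_Ioc_eq_integral_Ioo, ← intervalIntegral.integral_of_le zero_le_one,
      integral_pow]
    simp
  calc ∫ x in Ioo (0 : ℝ) 1, ‖x ^ k * w x‖ ≤ ∫ x in Ioo (0 : ℝ) 1, C * x ^ k := by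
        refine integral_mono_of_nonneg (ae_of_all _ fun _ => norm_nonneg _) ?_
          (ae_restrict_of_forall_mem measurableSet_Ioo fun x hx => ?_)
        · exact (continuous_const.mul (continuous_pow k)).integrableOn_Icc.mono_set
            Ioo_subset_Icc_self
        · show ‖x ^ k * w x‖ ≤ C * x ^ k
          rw [norm_mul, norm_pow, Real.norm_of_nonneg hx.1.le, Real.norm_eq_abs, mul_comm]
          exact mul_le_mul_of_nonneg_right (hC x hx) (pow_nonneg hx.1.le k)
    _ = C / (k + 1) := by rw [integral_const_mul, hpow, mul_one_div]

lemma summable_div_nat_add_one_pow (C : ℝ) {r : ℕ} (hr : 2 ≤ r) :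
    Summable fun k : ℕ => (C / (k + 1)) ^ r := by
  have h := (summable_nat_add_iff 1).2 (Real.summable_one_div_nat_pow.2 hr)
  refine (h.mul_left (C ^ r)).congr fun k => ?_
  simp [div_eq_mul_inv, mul_pow]

lemma summable_setIntegral_Ioo_zero_one_norm_pow_mul_pow {w : ℝ → ℝ} {C : ℝ}
    (hC : ∀ x ∈ Ioo (0 : ℝ) 1, |w x| ≤ C) {r : ℕ} (hr : 2 ≤ r) :
    Summable fun k : ℕ => (∫ x in Ioo (0 : ℝ) 1, ‖x ^ k * w x‖) ^ r := by
  have hnonneg (k : ℕ) : 0 ≤ ∫ x in Ioo (0 : ℝ) 1, ‖x ^ k * w x‖ :=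
    integral_nonneg fun _ => norm_nonneg _
  exact (summable_div_nat_add_one_pow C hr).of_nonneg_of_le (fun k => pow_nonneg (hnonneg k) r)
    fun k => pow_le_pow_left₀ (hnonneg k) (setIntegral_Ioo_zero_one_norm_pow_mul_le hC k) r

lemma setIntegral_univ_pi_Ioo_eq_integral_pi {ι : Type*} [Fintype ι] (z : ℝ) (R : ℝ → ℝ) :
    ∫ x in univ.pi (fun _ : ι => Ioo (0 : ℝ) 1),
        (∏ i, x i) ^ z / (1 - ∏ i, x i) * ∏ i, R (x i) =
      ∫ x, (∏ i, x i ^ z * R (x i)) / (1 - ∏ i, x i)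
        ∂Measure.pi fun _ : ι => volume.restrict (Ioo (0 : ℝ) 1) := by
  rw [← Measure.restrict_pi_pi, ← volume_pi]
  refine setIntegral_congr_fun (MeasurableSet.univ_pi fun _ => measurableSet_Ioo) fun x hx => ?_
  rw [Finset.prod_mul_distrib, Real.finsetProd_rpow _ _ fun i _ => (hx i trivial).1.le]
  ring

end UnitInterval

theorem stmt_3 (r : ℕ) (hr : 2 ≤ r) (n : ℕ) (a : ℕ → ℝ)
    (R : ℝ → ℝ) (hR : ∀ x, R x = ∑ l ∈ Finset.range (n + 1), a l * x ^ l)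
    (z : ℝ) (hz : 0 ≤ z) :
    ∫ x in Set.univ.pi (fun _ : Fin r => Set.Ioo (0:ℝ) 1),
        (∏ i, x i) ^ z / (1 - ∏ i, x i) * ∏ i, R (x i) =
      ∑' k : ℕ, (∑ l ∈ Finset.range (n + 1), a l / (l + k + z + 1)) ^ r := by
  have : Nonempty (Fin r) := ⟨⟨0, by omega⟩⟩
  rw [setIntegral_univ_pi_Ioo_eq_integral_pi]
  simp only [hR]
  rw [integral_pi_div_one_sub_prod (u := fun x => x) aestronglyMeasurable_id
    (ae_restrict_of_forall_mem measurableSet_Ioo fun _ hx => Ioo_subset_Ico_self hx)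
    (integrableOn_Ioo_zero_one_rpow_mul_sum hz _ _)
    (summable_setIntegral_Ioo_zero_one_norm_pow_mul_pow
      (fun x hx => abs_rpow_mul_sum_le hz (Ioo_subset_Icc_self hx) _ _) (by simpa using hr)),
    Fintype.card_fin]
  simp only [setIntegral_Ioo_zero_one_pow_mul_rpow_mul_sum (by linarith : -1 < z)]
end

section
/- Beukers' double integral: ∫_0^1 ∫_0^1 (-log(xy))/(1-xy) dx dy = 2ζ(3), where ζ is the Riemann zeta function. -/
/-!
On the unit square `-log (x y) / (1 - x y) = ∑ₖ (x y)ᵏ (-log x - log y)`, a series of nonnegative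
functions, so it may be integrated term by term. Since `∫₀¹ tᵏ dt = 1/(k+1)` and
`∫₀¹ tᵏ (-log t) dt = 1/(k+1)²`, the `k`-th term contributes `2/(k+1)³`, and these sum to `2 ζ(3)`.
-/

open MeasureTheory intervalIntegral

namespace Beukers

open Set Real

theorem setIntegral_tsum_of_nonneg {α ι : Type*} [MeasurableSpace α] [Countable ι]
    {μ : Measure α} {s : Set α} (hs : MeasurableSet s) {F : ι → α → ℝ}
    (hint : ∀ k, IntegrableOn (F k) s μ) (hnonneg : ∀ k, ∀ x ∈ s, 0 ≤ F k x)
    (hsum : Summable fun k => ∫ x in s, F k x ∂μ) :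
    ∫ x in s, ∑' k, F k x ∂μ = ∑' k, ∫ x in s, F k x ∂μ := by
  have hnorm : ∀ k, ∫ x in s, ‖F k x‖ ∂μ = ∫ x in s, F k x ∂μ := fun k =>
    setIntegral_congr_fun hs fun x hx => Real.norm_of_nonneg (hnonneg k x hx)
  exact (integral_tsum_of_summable_integral_norm hint (by simpa only [hnorm] using hsum)).symm

theorem pow_mul_neg_log_nonneg (n : ℕ) {x : ℝ} (hx₀ : 0 ≤ x) (hx₁ : x ≤ 1) :
    0 ≤ x ^ n * -log x :=
  mul_nonneg (pow_nonneg hx₀ n) (neg_nonneg.2 (log_nonpos hx₀ hx₁))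

noncomputable def negLogMomentPrimitive (n : ℕ) (t : ℝ) : ℝ :=
  t ^ (n + 1) / ((n : ℝ) + 1) ^ 2 - t ^ (n + 1) * log t / ((n : ℝ) + 1)

theorem hasDerivAt_negLogMomentPrimitive (n : ℕ) {x : ℝ} (hx : x ≠ 0) :
    HasDerivAt (negLogMomentPrimitive n) (x ^ n * -log x) x := by
  have hpow : HasDerivAt (fun t : ℝ => t ^ (n + 1)) (((n : ℝ) + 1) * x ^ n) x := by
    simpa using hasDerivAt_pow (n + 1) x
  refine ((hpow.div_const (((n : ℝ) + 1) ^ 2)).sub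
    ((hpow.mul (hasDerivAt_log hx)).div_const ((n : ℝ) + 1))).congr_deriv ?_
  field_simp
  ring

theorem continuous_negLogMomentPrimitive (n : ℕ) : Continuous (negLogMomentPrimitive n) := by
  have h : Continuous fun t : ℝ => t ^ (n + 1) * log t :=
    ((continuous_pow n).mul continuous_mul_log).congr fun t => by
      show t ^ n * (t * log t) = _; ring
  exact ((continuous_pow _).div_const _).sub (h.div_const _)

theorem integrableOn_pow_mul_neg_log (n : ℕ) :
    IntegrableOn (fun x : ℝ => x ^ n * -log x) (Ioo 0 1) :=
  (integrableOn_deriv_of_nonneg (continuous_negLogMomentPrimitive n).continuousOn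
    (fun _ hx => hasDerivAt_negLogMomentPrimitive n hx.1.ne')
    (fun _ hx => pow_mul_neg_log_nonneg n hx.1.le hx.2.le)).mono_set Ioo_subset_Ioc_self

theorem integral_pow_mul_neg_log (n : ℕ) :
    ∫ x in Ioo (0 : ℝ) 1, x ^ n * -log x = 1 / ((n : ℝ) + 1) ^ 2 := by
  have hint : IntervalIntegrable (fun x : ℝ => x ^ n * -log x) volume 0 1 :=
    (intervalIntegrable_iff_integrableOn_Ioo_of_le zero_le_one).2 (integrableOn_pow_mul_neg_log n)
  rw [← integral_Ioc_eq_integral_Ioo, ← integral_of_le zero_le_one,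
    integral_eq_sub_of_hasDerivAt_of_le zero_le_one
      (continuous_negLogMomentPrimitive n).continuousOn
      (fun _ hx => hasDerivAt_negLogMomentPrimitive n hx.1.ne') hint]
  simp [negLogMomentPrimitive]

theorem integrableOn_pow (n : ℕ) : IntegrableOn (fun x : ℝ => x ^ n) (Ioo 0 1) :=
  (continuous_pow n).integrableOn_Icc.mono_set Ioo_subset_Icc_self

theorem integral_pow_Ioo (n : ℕ) : ∫ x in Ioo (0 : ℝ) 1, x ^ n = 1 / ((n : ℝ) + 1) := by
  rw [← integral_Ioc_eq_integral_Ioo, ← integral_of_le zero_le_one, integral_pow]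
  simp

/-- `∫₀¹ (x y)ᵏ (-log (x y)) dy`. -/
noncomputable def innerTerm (k : ℕ) (x : ℝ) : ℝ :=
  x ^ k * -log x / ((k : ℝ) + 1) + x ^ k / ((k : ℝ) + 1) ^ 2

theorem innerTerm_nonneg (k : ℕ) {x : ℝ} (hx : x ∈ Ioo (0 : ℝ) 1) : 0 ≤ innerTerm k x := by
  unfold innerTerm
  exact add_nonneg (div_nonneg (pow_mul_neg_log_nonneg k hx.1.le hx.2.le) (by positivity))
    (div_nonneg (pow_nonneg hx.1.le k) (by positivity))

theorem summable_innerTerm {x : ℝ} (hx : x ∈ Ioo (0 : ℝ) 1) : Summable fun k => innerTerm k x := by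
  refine Summable.of_nonneg_of_le (fun k => innerTerm_nonneg k hx) (fun k => ?_)
    ((summable_geometric_of_lt_one hx.1.le hx.2).mul_right (-log x + 1))
  have hk : (1 : ℝ) ≤ (k : ℝ) + 1 := by linarith [k.cast_nonneg (α := ℝ)]
  have h₁ := div_le_self (pow_mul_neg_log_nonneg k hx.1.le hx.2.le) hk
  have h₂ := div_le_self (pow_nonneg hx.1.le k) (one_le_pow₀ (n := 2) hk)
  unfold innerTerm
  linarith

theorem integrableOn_innerTerm (k : ℕ) : IntegrableOn (innerTerm k) (Ioo 0 1) :=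
  ((integrableOn_pow_mul_neg_log k).div_const _).add ((integrableOn_pow k).div_const _)

theorem integral_innerTerm (k : ℕ) :
    ∫ x in Ioo (0 : ℝ) 1, innerTerm k x = 2 / ((k : ℝ) + 1) ^ 3 := by
  unfold innerTerm
  rw [integral_add ((integrableOn_pow_mul_neg_log k).div_const _)
      ((integrableOn_pow k).div_const _), MeasureTheory.integral_div, MeasureTheory.integral_div,
    integral_pow_mul_neg_log, integral_pow_Ioo]
  field_simp
  ring

theorem integral_neg_log_mul_div {x : ℝ} (hx : x ∈ Ioo (0 : ℝ) 1) :
    ∫ y in Ioo (0 : ℝ) 1, -log (x * y) / (1 - x * y) = ∑' k, innerTerm k x := by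
  set F : ℕ → ℝ → ℝ := fun k y => x ^ k * (-log x * y ^ k + y ^ k * -log y)
  have hlogx : 0 ≤ -log x := neg_nonneg.2 (log_nonpos hx.1.le hx.2.le)
  have hint : ∀ k, IntegrableOn (F k) (Ioo 0 1) := fun k =>
    (((integrableOn_pow k).const_mul _).add (integrableOn_pow_mul_neg_log k)).const_mul _
  have hnonneg : ∀ k, ∀ y ∈ Ioo (0 : ℝ) 1, 0 ≤ F k y := fun k y hy =>
    mul_nonneg (pow_nonneg hx.1.le k)
      (add_nonneg (mul_nonneg hlogx (pow_nonneg hy.1.le k))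
        (pow_mul_neg_log_nonneg k hy.1.le hy.2.le))
  have hintegral : ∀ k, ∫ y in Ioo (0 : ℝ) 1, F k y = innerTerm k x := fun k => by
    rw [MeasureTheory.integral_const_mul, integral_add ((integrableOn_pow k).const_mul _)
      (integrableOn_pow_mul_neg_log k), MeasureTheory.integral_const_mul, integral_pow_Ioo,
      integral_pow_mul_neg_log, innerTerm]
    ring
  have hgeom : ∀ y ∈ Ioo (0 : ℝ) 1, -log (x * y) / (1 - x * y) = ∑' k, F k y := by
    intro y hy
    have hxy : x * y < 1 := by nlinarith [hx.2, hy.1, hy.2]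
    rw [tsum_congr fun k => show F k y = (x * y) ^ k * -log (x * y) by
        rw [log_mul hx.1.ne' hy.1.ne', mul_pow]; ring,
      tsum_mul_right, tsum_geometric_of_lt_one (mul_nonneg hx.1.le hy.1.le) hxy, inv_mul_eq_div]
  rw [setIntegral_congr_fun measurableSet_Ioo hgeom,
    setIntegral_tsum_of_nonneg measurableSet_Ioo hint hnonneg
      (by simpa only [hintegral] using summable_innerTerm hx)]
  exact tsum_congr hintegral

theorem summable_one_div_add_one_pow_three : Summable fun k : ℕ => 1 / ((k : ℝ) + 1) ^ 3 := by
  simpa using (summable_nat_add_iff 1).2 (Real.summable_one_div_nat_pow.2 (by norm_num : 1 < 3))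

theorem integral_beukers :
    ∫ x in (0 : ℝ)..1, ∫ y in (0 : ℝ)..1, -log (x * y) / (1 - x * y) =
      2 * ∑' k : ℕ, 1 / ((k : ℝ) + 1) ^ 3 := by
  have hinner : EqOn (fun x : ℝ => ∫ y in (0 : ℝ)..1, -log (x * y) / (1 - x * y))
      (fun x => ∑' k, innerTerm k x) (Ioo 0 1) := fun x hx => by
    simp only [integral_of_le zero_le_one, integral_Ioc_eq_integral_Ioo,
      integral_neg_log_mul_div hx]
  have hsum : Summable fun k => ∫ x in Ioo (0 : ℝ) 1, innerTerm k x := by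
    simpa only [integral_innerTerm, mul_one_div] using summable_one_div_add_one_pow_three.mul_left 2
  rw [integral_of_le zero_le_one, integral_Ioc_eq_integral_Ioo,
    setIntegral_congr_fun measurableSet_Ioo hinner,
    setIntegral_tsum_of_nonneg measurableSet_Ioo integrableOn_innerTerm
      (fun k _ hx => innerTerm_nonneg k hx) hsum,
    ← tsum_mul_left]
  simp only [integral_innerTerm, mul_one_div]

theorem riemannZeta_three : riemannZeta 3 = ((∑' k : ℕ, 1 / ((k : ℝ) + 1) ^ 3 : ℝ) : ℂ) := by
  rw [zeta_eq_tsum_one_div_nat_add_one_cpow (by norm_num), Complex.ofReal_tsum]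
  congr 1
  funext k
  push_cast
  rw [show (3 : ℂ) = ((3 : ℕ) : ℂ) by norm_num, Complex.cpow_natCast]

end Beukers

theorem stmt_7 :
    ((∫ x in (0:ℝ)..1, ∫ y in (0:ℝ)..1, (-Real.log (x * y)) / (1 - x * y) : ℝ) : ℂ) =
      2 * riemannZeta 3 := by
  rw [Beukers.integral_beukers, Beukers.riemannZeta_three, Complex.ofReal_mul,
    Complex.ofReal_ofNat]
end

section
/- For r ≥ 2 and v ≥ 0, ∫_{[0,1]^r} (-log(x_1⋯x_r))^v/(1 - x_1⋯x_r) dx_1⋯dx_r = (∑-free closed form) (v+r-1)!/(r-1)! · ζ(v+r). -/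
/-!
If `x` is uniform on `(0, 1)^r`, the product `u = x₁ ⋯ xᵣ` has density `(-log u)^(r-1)/(r-1)!`
on `(0, 1)`: multiplying by one more independent uniform variable convolves the density with
`x⁻¹`, and `∫ₜ¹ (log x - log t)^n / n! dx/x = (-log t)^(n+1)/(n+1)!`. The cube integral thus
becomes `∫₀¹ (-log u)^(v+r-1) / ((r-1)! (1-u)) du`; expanding `1/(1-u)` as a geometric series and
using `∫₀¹ u^k (-log u)^m du = m!/(k+1)^(m+1)` (substitute `u = e^(-t)`: a Gamma integral) gives
`(v+r-1)!/(r-1)! · ∑ₖ (k+1)^-(v+r)`. Working with lower Lebesgue integrals makes every use of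
Fubini and every exchange of sum and integral unconditional.
-/

open MeasureTheory Real Set
open scoped ENNReal Nat

noncomputable section

namespace CubeZeta

theorem image_exp_neg_Ioi_zero : (fun t ↦ exp (-t)) '' Ioi 0 = Ioo 0 1 := by
  ext u
  constructor
  · rintro ⟨t, ht, rfl⟩
    exact ⟨exp_pos _, Real.exp_lt_one_iff.2 (neg_neg_of_pos ht)⟩
  · rintro ⟨h0, h1⟩
    exact ⟨-log u, neg_pos.2 (log_neg h0 h1), by simp [exp_log h0]⟩

theorem setLIntegral_Ioo_zero_one_eq_setLIntegral_Ioi_exp_neg (g : ℝ → ℝ≥0∞) :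
    ∫⁻ u in Ioo 0 1, g u = ∫⁻ t in Ioi 0, ENNReal.ofReal (exp (-t)) * g (exp (-t)) := by
  have hderiv (t : ℝ) : HasDerivWithinAt (fun t ↦ exp (-t)) (-exp (-t)) (Ioi 0) t := by
    simpa using ((hasDerivAt_neg t).exp).hasDerivWithinAt
  have hinj : InjOn (fun t ↦ exp (-t)) (Ioi 0) := fun a _ b _ h ↦ neg_injective (exp_injective h)
  rw [← image_exp_neg_Ioi_zero,
    lintegral_image_eq_lintegral_abs_deriv_mul measurableSet_Ioi (fun t _ ↦ hderiv t) hinj]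
  simp_rw [abs_neg, abs_of_pos (exp_pos _)]

theorem setLIntegral_pow_mul_neg_log_pow (k m : ℕ) :
    ∫⁻ u in Ioo 0 1, ENNReal.ofReal (u ^ k * (-log u) ^ m)
      = ENNReal.ofReal (m ! / ((k : ℝ) + 1) ^ (m + 1)) := by
  have hb : (0 : ℝ) < k + 1 := by positivity
  have hsubst : ∀ t ∈ Ioi (0 : ℝ), ENNReal.ofReal (exp (-t)) *
      ENNReal.ofReal (exp (-t) ^ k * (-log (exp (-t))) ^ m)
        = ENNReal.ofReal (t ^ ((m + 1 : ℝ) - 1) * exp (-((k + 1) * t))) := by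
    intro t _
    rw [← ENNReal.ofReal_mul (exp_pos _).le, log_exp, neg_neg, add_sub_cancel_right,
      rpow_natCast, ← exp_nat_mul, ← mul_assoc, ← exp_add]
    ring_nf
  have hint : IntegrableOn (fun t : ℝ ↦ t ^ ((m + 1 : ℝ) - 1) * exp (-((k + 1) * t))) (Ioi 0) := by
    exact (integrableOn_rpow_mul_exp_neg_mul_rpow (p := 1) (s := (m + 1 : ℝ) - 1)
      (by linarith [(m.cast_nonneg : (0:ℝ) ≤ m)]) one_pos hb).congr_fun
      (fun t _ ↦ by simp only [rpow_one, neg_mul]) measurableSet_Ioi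
  rw [setLIntegral_Ioo_zero_one_eq_setLIntegral_Ioi_exp_neg,
    setLIntegral_congr_fun measurableSet_Ioi hsubst, ← ofReal_integral_eq_lintegral_ofReal hint,
    integral_rpow_mul_exp_neg_mul_Ioi (by positivity) hb]
  · rw [Gamma_nat_eq_factorial, div_rpow zero_le_one hb.le, one_rpow,
      show (m + 1 : ℝ) = (m + 1 : ℕ) by push_cast; rfl, rpow_natCast, one_div_mul_eq_div]
  · filter_upwards [ae_restrict_mem measurableSet_Ioi] with t ht
    exact mul_nonneg (rpow_nonneg (le_of_lt ht) _) (exp_pos _).le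

theorem setLIntegral_Ioo_comp_mul_left {x : ℝ} (hx : 0 < x) {g : ℝ → ℝ≥0∞} (hg : Measurable g) :
    ∫⁻ u in Ioo 0 1, g (x * u) = ENNReal.ofReal x⁻¹ * ∫⁻ t in Ioo 0 x, g t := by
  have hpre : (x * ·) ⁻¹' Ioo 0 x = Ioo 0 1 := by
    ext u
    simp only [mem_preimage, mem_Ioo]
    constructor <;> rintro ⟨h1, h2⟩ <;> constructor <;> nlinarith
  rw [← hpre, ← lintegral_map hg (measurable_const_mul x),
    ← Measure.restrict_map (measurable_const_mul x) measurableSet_Ioo,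
    Real.map_volume_mul_left hx.ne', Measure.restrict_smul, lintegral_smul_measure,
    abs_of_pos (inv_pos.2 hx), smul_eq_mul]

theorem setLIntegral_Ioo_setLIntegral_Ioo_swap {a b : ℝ} {F : ℝ → ℝ → ℝ≥0∞}
    (hF : Measurable (Function.uncurry F)) :
    ∫⁻ x in Ioo a b, ∫⁻ t in Ioo a x, F x t = ∫⁻ t in Ioo a b, ∫⁻ x in Ioo t b, F x t := by
  set G : ℝ → ℝ → ℝ≥0∞ := fun x t ↦ {p : ℝ × ℝ | p.2 < p.1}.indicator (Function.uncurry F) (x, t)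
  have hG : Measurable (Function.uncurry G) :=
    hF.indicator (measurableSet_lt measurable_snd measurable_fst)
  have hleft : ∀ x ∈ Ioo a b, ∫⁻ t in Ioo a x, F x t = ∫⁻ t in Ioo a b, G x t := by
    intro x hx
    have hGx : G x = (Iio x).indicator (F x) := by
      ext t
      simp only [G, indicator_apply, mem_ofPred_eq, mem_Iio, Function.uncurry_apply_pair]
    rw [hGx, lintegral_indicator measurableSet_Iio, Measure.restrict_restrict measurableSet_Iio,
      Iio_inter_Ioo, min_eq_left hx.2.le]
  have hright : ∀ t ∈ Ioo a b, ∫⁻ x in Ioo t b, F x t = ∫⁻ x in Ioo a b, G x t := by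
    intro t ht
    have hGt : (G · t) = (Ioi t).indicator (F · t) := by
      ext x
      simp only [G, indicator_apply, mem_ofPred_eq, mem_Ioi, Function.uncurry_apply_pair]
    rw [hGt, lintegral_indicator measurableSet_Ioi, Measure.restrict_restrict measurableSet_Ioi,
      Ioi_inter_Ioo, max_eq_left ht.1.le]
  rw [setLIntegral_congr_fun measurableSet_Ioo hleft,
    setLIntegral_congr_fun measurableSet_Ioo hright,
    lintegral_lintegral_swap hG.aemeasurable]

/-- The density on `(0, 1)` of a product of `n + 1` independent uniform variables on `(0, 1)`. -/
def prodUniformDensity (n : ℕ) (u : ℝ) : ℝ≥0∞ := ENNReal.ofReal ((-log u) ^ n / n !)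

theorem setLIntegral_Ioo_inv_mul_prodUniformDensity_div {t : ℝ} (ht : 0 < t) (ht1 : t ≤ 1)
    (n : ℕ) :
    ∫⁻ x in Ioo t 1, ENNReal.ofReal x⁻¹ * prodUniformDensity n (t / x)
      = prodUniformDensity (n + 1) t := by
  set L : ℝ → ℝ := fun x ↦ log x - log t
  set P : ℝ → ℝ := fun y ↦ y ^ n / (n !)
  have hpos : ∀ x ∈ Icc t 1, 0 < x := fun x hx ↦ ht.trans_le hx.1
  have hL : ∀ x ∈ uIcc t 1, HasDerivAt L x⁻¹ x := fun x hx ↦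
    (hasDerivAt_log (hpos x (uIcc_of_le ht1 ▸ hx)).ne').sub_const _
  have hcont : ContinuousOn (fun x ↦ (P ∘ L) x * x⁻¹) (Icc t 1) := by
    have hne : ∀ x ∈ Icc t 1, x ≠ 0 := fun x hx ↦ (hpos x hx).ne'
    exact ((((continuousOn_log.mono hne).sub continuousOn_const).pow n).div_const _).mul
      (continuousOn_inv₀.mono hne)
  have hint : IntegrableOn (fun x ↦ (P ∘ L) x * x⁻¹) (Ioo t 1) :=
    hcont.integrableOn_Icc.mono_set Ioo_subset_Icc_self
  have hrw : ∀ x ∈ Ioo t 1, ENNReal.ofReal x⁻¹ * prodUniformDensity n (t / x)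
      = ENNReal.ofReal ((P ∘ L) x * x⁻¹) := by
    intro x hx
    have hx0 : 0 < x := ht.trans hx.1
    rw [prodUniformDensity, ← ENNReal.ofReal_mul (inv_nonneg.2 hx0.le), mul_comm,
      log_div ht.ne' hx0.ne', neg_sub]
    rfl
  rw [setLIntegral_congr_fun measurableSet_Ioo hrw, ← ofReal_integral_eq_lintegral_ofReal hint,
    ← integral_Ioc_eq_integral_Ioo, ← intervalIntegral.integral_of_le ht1,
    intervalIntegral.integral_comp_mul_deriv hL (continuousOn_inv₀.mono ?_) (by fun_prop)]
  · simp only [L, P, sub_self, log_one, zero_sub, intervalIntegral.integral_div, integral_pow,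
      prodUniformDensity]
    rw [zero_pow n.succ_ne_zero, sub_zero, Nat.factorial_succ, Nat.cast_mul, div_div,
      Nat.cast_succ]
  · intro x hx
    exact (hpos x (uIcc_of_le ht1 ▸ hx)).ne'
  · filter_upwards [ae_restrict_mem measurableSet_Ioo] with x hx
    have hLx : 0 ≤ L x := sub_nonneg.2 (log_le_log ht hx.1.le)
    have := (ht.trans hx.1).le
    simp only [Function.comp_apply, P]
    positivity

@[fun_prop]
theorem measurable_prodUniformDensity (n : ℕ) : Measurable (prodUniformDensity n) := by
  unfold prodUniformDensity
  fun_prop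

theorem setLIntegral_lintegral_comp_mul_prodUniformDensity (n : ℕ) {f : ℝ → ℝ≥0∞}
    (hf : Measurable f) :
    ∫⁻ x in Ioo 0 1, ∫⁻ u in Ioo 0 1, f (x * u) * prodUniformDensity n u
      = ∫⁻ t in Ioo 0 1, f t * prodUniformDensity (n + 1) t := by
  calc _ = ∫⁻ x in Ioo 0 1, ∫⁻ t in Ioo 0 x,
        ENNReal.ofReal x⁻¹ * (f t * prodUniformDensity n (t / x)) := by
        refine setLIntegral_congr_fun measurableSet_Ioo fun x hx ↦ ?_
        have hg : Measurable fun t ↦ f t * prodUniformDensity n (t / x) := by fun_prop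
        rw [lintegral_const_mul _ hg, ← setLIntegral_Ioo_comp_mul_left hx.1 hg]
        simp only [mul_div_cancel_left₀ _ hx.1.ne']
    _ = ∫⁻ t in Ioo 0 1, ∫⁻ x in Ioo t 1,
        ENNReal.ofReal x⁻¹ * (f t * prodUniformDensity n (t / x)) :=
      setLIntegral_Ioo_setLIntegral_Ioo_swap (by fun_prop)
    _ = _ := by
        refine setLIntegral_congr_fun measurableSet_Ioo fun t ht ↦ ?_
        simp_rw [mul_left_comm _ (f t)]
        rw [lintegral_const_mul _ (by fun_prop),
          setLIntegral_Ioo_inv_mul_prodUniformDensity_div ht.1 ht.2.le]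

theorem lintegral_comp_prod_pi_Ioo (n : ℕ) {f : ℝ → ℝ≥0∞} (hf : Measurable f) :
    ∫⁻ x, f (∏ i, x i) ∂Measure.pi (fun _ : Fin (n + 1) ↦ volume.restrict (Ioo (0 : ℝ) 1))
      = ∫⁻ u in Ioo 0 1, f u * prodUniformDensity n u := by
  induction n generalizing f with
  | zero =>
    simp only [prodUniformDensity, pow_zero, Nat.factorial_zero, Nat.cast_one, div_one,
      ENNReal.ofReal_one, mul_one, Nat.reduceAdd, Fin.prod_univ_one]
    exact (measurePreserving_funUnique (volume.restrict (Ioo (0 : ℝ) 1)) (Fin 1)).lintegral_comp hf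
  | succ n ih =>
    have hsplit := measurePreserving_piFinSuccAbove
      (fun _ : Fin (n + 2) ↦ volume.restrict (Ioo (0 : ℝ) 1)) 0
    have hG : Measurable fun p : ℝ × (Fin (n + 1) → ℝ) ↦ f (p.1 * ∏ j, p.2 j) := by fun_prop
    rw [← setLIntegral_lintegral_comp_mul_prodUniformDensity n hf,
      ← lintegral_congr fun x ↦ ih (f := fun u ↦ f (x * u)) (hf.comp (measurable_const_mul x)),
      ← lintegral_prod _ hG.aemeasurable, ← hsplit.lintegral_comp hG]
    simp_rw [Fin.prod_univ_succ]
    rfl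

theorem neg_log_pow_div_one_sub_mul_prodUniformDensity {u : ℝ} (hu : u ∈ Ioo 0 1) (v s : ℕ) :
    ENNReal.ofReal ((-log u) ^ v / (1 - u)) * prodUniformDensity s u
      = ∑' k : ℕ, ENNReal.ofReal (s !)⁻¹ * ENNReal.ofReal (u ^ k * (-log u) ^ (v + s)) := by
  have hlog : 0 ≤ -log u := neg_nonneg.2 (log_nonpos hu.1.le hu.2.le)
  have hgeom : HasSum (fun k ↦ u ^ k * (-log u) ^ (v + s)) ((-log u) ^ (v + s) / (1 - u)) := by
    simpa [div_eq_inv_mul] using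
      (hasSum_geometric_of_lt_one hu.1.le hu.2).mul_right ((-log u) ^ (v + s))
  rw [ENNReal.tsum_mul_left, ← ENNReal.ofReal_tsum_of_nonneg
      (fun k ↦ mul_nonneg (pow_nonneg hu.1.le k) (pow_nonneg hlog _)) hgeom.summable,
    hgeom.tsum_eq, prodUniformDensity,
    ← ENNReal.ofReal_mul (div_nonneg (pow_nonneg hlog v) (sub_nonneg.2 hu.2.le)),
    ← ENNReal.ofReal_mul (by positivity)]
  congr 1
  ring

theorem setLIntegral_neg_log_pow_div_one_sub_mul_prodUniformDensity (v s : ℕ) :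
    ∫⁻ u in Ioo 0 1, ENNReal.ofReal ((-log u) ^ v / (1 - u)) * prodUniformDensity s u
      = ∑' k : ℕ, ENNReal.ofReal ((v + s)! / s ! / ((k : ℝ) + 1) ^ (v + s + 1)) := by
  rw [setLIntegral_congr_fun measurableSet_Ioo
      fun u hu ↦ neg_log_pow_div_one_sub_mul_prodUniformDensity hu v s,
    lintegral_tsum fun k ↦ by fun_prop]
  refine tsum_congr fun k ↦ ?_
  rw [lintegral_const_mul _ (by fun_prop), setLIntegral_pow_mul_neg_log_pow,
    ← ENNReal.ofReal_mul (by positivity)]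
  congr 1
  ring

-- For `v = s = 0` both sides are the junk value `0`: the integral and the series diverge.
theorem setIntegral_univ_pi_Ioo_neg_log_prod_pow_div_one_sub_prod (s v : ℕ) :
    ∫ x in univ.pi (fun _ : Fin (s + 1) ↦ Ioo (0 : ℝ) 1), (-log (∏ i, x i)) ^ v / (1 - ∏ i, x i)
      = (v + s)! / s ! * ∑' k : ℕ, 1 / ((k : ℝ) + 1) ^ (v + s + 1) := by
  set F : ℝ → ℝ := fun p ↦ (-log p) ^ v / (1 - p)
  have hF : ∀ p ∈ Icc (0 : ℝ) 1, 0 ≤ F p := fun p hp ↦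
    div_nonneg (pow_nonneg (neg_nonneg.2 (log_nonpos hp.1 hp.2)) v) (sub_nonneg.2 hp.2)
  have hFm : Measurable F := by fun_prop
  have hprod : ∀ x ∈ univ.pi (fun _ : Fin (s + 1) ↦ Ioo (0 : ℝ) 1), ∏ i, x i ∈ Icc (0 : ℝ) 1 :=
    fun x hx ↦ ⟨Finset.prod_nonneg fun i _ ↦ (hx i trivial).1.le,
      Finset.prod_le_one (fun i _ ↦ (hx i trivial).1.le) fun i _ ↦ (hx i trivial).2.le⟩
  have hnonneg : 0 ≤ᵐ[volume.restrict (univ.pi fun _ : Fin (s + 1) ↦ Ioo (0 : ℝ) 1)]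
      fun x ↦ F (∏ i, x i) := by
    filter_upwards [ae_restrict_mem (MeasurableSet.univ_pi fun _ ↦ measurableSet_Ioo)] with x hx
    exact hF _ (hprod x hx)
  have hlint := lintegral_comp_prod_pi_Ioo s (f := fun p ↦ ENNReal.ofReal (F p)) hFm.ennreal_ofReal
  rw [integral_eq_lintegral_of_nonneg_ae hnonneg
      (hFm.comp (by fun_prop)).aestronglyMeasurable, volume_pi, Measure.restrict_pi_pi,
    hlint, setLIntegral_neg_log_pow_div_one_sub_mul_prodUniformDensity,
    ENNReal.tsum_toReal_eq fun _ ↦ ENNReal.ofReal_ne_top, ← tsum_mul_left]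
  refine tsum_congr fun k ↦ ?_
  rw [ENNReal.toReal_ofReal (by positivity)]
  ring

theorem riemannZeta_natCast_eq_tsum {m : ℕ} (hm : 1 < m) :
    riemannZeta m = ((∑' k : ℕ, 1 / ((k : ℝ) + 1) ^ m : ℝ) : ℂ) := by
  rw [zeta_eq_tsum_one_div_nat_add_one_cpow (by simpa using hm), Complex.ofReal_tsum]
  push_cast
  simp [Complex.cpow_natCast]

end CubeZeta

open CubeZeta in
theorem stmt_9 (r : ℕ) (hr : 2 ≤ r) (v : ℕ) :
    ((∫ x in Set.univ.pi (fun _ : Fin r => Set.Ioo (0:ℝ) 1),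
        (-Real.log (∏ i, x i)) ^ v / (1 - ∏ i, x i) : ℝ) : ℂ) =
      ((v + r - 1).factorial : ℂ) / ((r - 1).factorial : ℂ) * riemannZeta (v + r) := by
  obtain ⟨s, rfl⟩ : ∃ s, r = s + 1 := ⟨r - 1, by omega⟩
  rw [setIntegral_univ_pi_Ioo_neg_log_prod_pow_div_one_sub_prod, ← Nat.cast_add,
    riemannZeta_natCast_eq_tsum (by omega), show v + (s + 1) - 1 = v + s by omega,
    Nat.add_sub_cancel, ← add_assoc]
  push_cast
  rfl
end
end

section
/- For nonnegative integers k, v and r ≥ 1: ∫_{[0,1]^r} (x_1⋯x_r)^k (-log(x_1⋯x_r))^v dx_1⋯dx_r = (v + r - 1)! / ((r-1)! (k+1)^{v+r}). -/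
/-! Substituting `x = exp (-t)` turns `∫₀¹ x ^ k * (-log x) ^ m` into the Gamma integral
`∫₀^∞ t ^ m * exp (-(k + 1) t) = m! / (k + 1) ^ (m + 1)`. In dimension `r + 1`, split off one
coordinate: `-log (x₀ p) = -log x₀ - log p`, so the binomial theorem and Fubini express the
integral through the one-dimensional and the `r`-dimensional ones. Written as
`C(v + r, r) * v! / (k + 1) ^ (v + r + 1)`, the induction closes by the hockey-stick identity
`∑_{j ≤ v} C(j + r, r) = C(v + r + 1, r + 1)`. Integrability needed for Fubini comes for free,
since every integral computed along the way is nonzero. -/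

open MeasureTheory Real Set
open scoped Nat

lemma integral_Ioi_pow_mul_exp_neg_mul (m : ℕ) {c : ℝ} (hc : 0 < c) :
    ∫ t in Ioi 0, t ^ m * exp (-(c * t)) = m ! / c ^ (m + 1) := by
  have key := integral_rpow_mul_exp_neg_mul_Ioi (a := m + 1) (by positivity) hc
  simp_rw [add_sub_cancel_right, rpow_natCast] at key
  rw [key, Gamma_nat_eq_factorial, one_div, inv_rpow hc.le, ← rpow_natCast, Nat.cast_add_one,
    inv_mul_eq_div]

lemma image_exp_neg_Ioi_zero : (fun t ↦ exp (-t)) '' Ioi 0 = Ioo 0 1 := by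
  rw [show (fun t ↦ exp (-t)) = exp ∘ Neg.neg from rfl, image_comp, image_neg_Ioi, neg_zero,
    image_exp_Iio, exp_zero]

lemma integral_Ioo_pow_mul_neg_log_pow (k m : ℕ) :
    ∫ x in Ioo 0 1, x ^ k * (-log x) ^ m = m ! / ((k : ℝ) + 1) ^ (m + 1) := by
  rw [← image_exp_neg_Ioi_zero, integral_image_eq_integral_abs_deriv_smul measurableSet_Ioi
      (fun t _ ↦ (hasDerivAt_neg t).exp.hasDerivWithinAt)
      (fun a _ b _ h ↦ neg_injective (exp_injective h)),
    ← integral_Ioi_pow_mul_exp_neg_mul m (by positivity)]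
  refine setIntegral_congr_fun measurableSet_Ioi fun t _ ↦ ?_
  rw [abs_of_neg (by simpa using exp_pos (-t)), log_exp, neg_neg, smul_eq_mul, ← exp_nat_mul,
    show -(((k : ℝ) + 1) * t) = -t + k * -t by ring, exp_add]
  ring

lemma mul_pow_mul_neg_log_mul_pow_eq_sum {x y : ℝ} (hx : x ≠ 0) (hy : y ≠ 0) (k v : ℕ) :
    (x * y) ^ k * (-log (x * y)) ^ v = ∑ j ∈ Finset.range (v + 1),
      v.choose j * ((x ^ k * (-log x) ^ (v - j)) * (y ^ k * (-log y) ^ j)) := by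
  rw [log_mul hx hy, neg_add, add_comm, add_pow, Finset.mul_sum]
  refine Finset.sum_congr rfl fun j _ ↦ ?_
  ring

lemma integral_pi_prod_pow_mul_neg_log_pow_succ (μ : Measure ℝ) [SigmaFinite μ]
    [NullSingletonClass μ] (k r v : ℕ)
    (hint₁ : ∀ j ≤ v, Integrable (fun x ↦ x ^ k * (-log x) ^ j) μ)
    (hintᵣ : ∀ j ≤ v, Integrable (fun p : Fin r → ℝ ↦ (∏ i, p i) ^ k * (-log (∏ i, p i)) ^ j)
      (Measure.pi fun _ ↦ μ)) :
    ∫ x : Fin (r + 1) → ℝ, (∏ i, x i) ^ k * (-log (∏ i, x i)) ^ v ∂(Measure.pi fun _ ↦ μ) =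
      ∑ j ∈ Finset.range (v + 1), v.choose j * ((∫ x, x ^ k * (-log x) ^ (v - j) ∂μ) *
        ∫ p : Fin r → ℝ, (∏ i, p i) ^ k * (-log (∏ i, p i)) ^ j ∂(Measure.pi fun _ ↦ μ)) := by
  have hsplit : ∫ x : Fin (r + 1) → ℝ, (∏ i, x i) ^ k * (-log (∏ i, x i)) ^ v
      ∂(Measure.pi fun _ ↦ μ) = ∫ z : ℝ × (Fin r → ℝ), (z.1 * ∏ i, z.2 i) ^ k *
        (-log (z.1 * ∏ i, z.2 i)) ^ v ∂(μ.prod (Measure.pi fun _ ↦ μ)) := by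
    rw [← (measurePreserving_piFinSuccAbove (fun _ : Fin (r + 1) ↦ μ) 0).integral_comp']
    simp [Fin.prod_univ_succ, Fin.tail]
  have hne : ∀ᵐ z ∂μ.prod (Measure.pi fun _ : Fin r ↦ μ), z.1 ≠ 0 ∧ ∏ i, z.2 i ≠ 0 := by
    refine (Measure.quasiMeasurePreserving_fst.ae (Measure.ae_ne μ 0)).and
      (Measure.quasiMeasurePreserving_snd.ae (p := fun p : Fin r → ℝ ↦ ∏ i, p i ≠ 0) ?_)
    filter_upwards [ae_all_iff.2 fun i ↦ Measure.ae_eval_ne (fun _ ↦ μ) i 0] with p hp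
    exact Finset.prod_ne_zero_iff.2 fun i _ ↦ hp i
  have hterm : ∀ j ∈ Finset.range (v + 1), Integrable (fun z : ℝ × (Fin r → ℝ) ↦ v.choose j *
      ((z.1 ^ k * (-log z.1) ^ (v - j)) * ((∏ i, z.2 i) ^ k * (-log (∏ i, z.2 i)) ^ j)))
      (μ.prod (Measure.pi fun _ ↦ μ)) := fun j hj ↦
    ((hint₁ _ (Nat.sub_le v j)).mul_prod (hintᵣ j (Finset.mem_range_succ_iff.1 hj))).const_mul _
  rw [hsplit, integral_congr_ae (hne.mono fun z hz ↦
      mul_pow_mul_neg_log_mul_pow_eq_sum hz.1 hz.2 k v),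
    integral_finsetSum _ hterm]
  refine Finset.sum_congr rfl fun j _ ↦ ?_
  rw [integral_const_mul, ← integral_prod_mul]

lemma integral_pi_Ioo_prod_pow_mul_neg_log_pow (k r v : ℕ) :
    ∫ x : Fin (r + 1) → ℝ, (∏ i, x i) ^ k * (-log (∏ i, x i)) ^ v
        ∂(Measure.pi fun _ ↦ volume.restrict (Ioo 0 1)) =
      (v + r).choose r * v ! / ((k : ℝ) + 1) ^ (v + r + 1) := by
  induction r generalizing v with
  | zero =>
    calc _ = ∫ x in Ioo 0 1, x ^ k * (-log x) ^ v := by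
          rw [← (measurePreserving_funUnique (volume.restrict (Ioo (0 : ℝ) 1))
            (Fin 1)).integral_comp']
          simp
          rfl -- the index types `Fin (0 + 1)` and `Fin 1` differ only up to unfolding
      _ = _ := by simp [integral_Ioo_pow_mul_neg_log_pow]
  | succ r ih =>
    have hchoose (j : ℕ) : ((j + r).choose r : ℝ) ≠ 0 :=
      Nat.cast_ne_zero.2 (Nat.choose_pos (Nat.le_add_left r j)).ne'
    rw [integral_pi_prod_pow_mul_neg_log_pow_succ _ k (r + 1) v
      (fun j _ ↦ .of_integral_ne_zero (by rw [integral_Ioo_pow_mul_neg_log_pow]; positivity))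
      (fun j _ ↦ .of_integral_ne_zero (by
        rw [ih]; exact div_ne_zero (mul_ne_zero (hchoose j) (by positivity)) (by positivity)))]
    have hterm : ∀ j ∈ Finset.range (v + 1), (v.choose j : ℝ) *
        ((∫ x in Ioo 0 1, x ^ k * (-log x) ^ (v - j)) *
          ∫ p : Fin (r + 1) → ℝ, (∏ i, p i) ^ k * (-log (∏ i, p i)) ^ j
            ∂(Measure.pi fun _ ↦ volume.restrict (Ioo 0 1))) =
        (j + r).choose r * v ! / ((k : ℝ) + 1) ^ (v + (r + 1) + 1) := by
      intro j hj
      have hjv : j ≤ v := Finset.mem_range_succ_iff.1 hj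
      rw [integral_Ioo_pow_mul_neg_log_pow, ih, ← Nat.choose_mul_factorial_mul_factorial hjv,
        show v + (r + 1) + 1 = (v - j + 1) + (j + r + 1) by omega]
      push_cast
      field_simp
      ring
    rw [Finset.sum_congr rfl hterm, ← Finset.sum_div, ← Finset.sum_mul, ← Nat.cast_sum,
      Nat.sum_range_add_choose, show v + (r + 1) = v + r + 1 by omega]

theorem stmt_19 (r : ℕ) (hr : 1 ≤ r) (k v : ℕ) :
    ∫ x in Set.univ.pi (fun _ : Fin r => Set.Ioo (0:ℝ) 1),
        (∏ i, x i) ^ k * (-Real.log (∏ i, x i)) ^ v =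
      ((v + r - 1).factorial : ℝ) / (((r - 1).factorial : ℝ) * (k + 1) ^ (v + r)) := by
  obtain ⟨r, rfl⟩ := Nat.exists_eq_add_of_le' hr
  rw [volume_pi, Measure.restrict_pi_pi, integral_pi_Ioo_prod_pow_mul_neg_log_pow,
    Nat.add_sub_cancel, ← add_assoc, Nat.add_sub_cancel,
    ← Nat.add_choose_mul_factorial_mul_factorial v r]
  push_cast
  field_simp
end
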